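/- Let f : ℝ → ℝ be three times continuously differentiable on a neighborhood of a point α with f(α) = 0 and f'(α) ≠ 0. Then there exist δ > 0 and a constant C ≥ 0 such that for every starting point x₀ with |x₀ − α| < δ, the Weerakoon–Fernando iteration x_{n+1} = x_n − 2 f(x_n) / ( f'(x_n) + f'(x_n − f(x_n)/f'(x_n)) ) is well defined (all denominators are nonzero), the sequence (x_n) converges to α, and |x_{n+1} − α| ≤ C |x_n − α|³ for all n. -/

import Mathlib

/-!
Centred at the root `α`, Taylor's formula gives `f(x) = a e + b e²/2 + O(e³)` and
`f'(y) = a + b (y - α) + O((y - α)²)` with `e = x - α`, `a = f'(α) ≠ 0`, `b = f''(α)`.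
The Newton point `w` satisfies `w - α = O(e²)`, and substituting these expansions into the
numerator of `x_{n+1} - α = (e (f'(x) + f'(w)) - 2 f(x)) / (f'(x) + f'(w))` cancels the terms of
order `e` and `e²`, while the denominator tends to `2a ≠ 0`. So one step is an `O(e³)` map
near `α`; such a map contracts a small ball around `α` and its orbits converge geometrically.
-/

open Filter Topology Asymptotics Set

theorem isBigO_sub_pow_succ_of_hasDerivAt {E : Type*} [NormedAddCommGroup E] [NormedSpace ℝ E]
    {g g' : ℝ → E} {x₀ : ℝ} {n : ℕ} (hg : ∀ᶠ x in 𝓝 x₀, HasDerivAt g (g' x) x)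
    (hg' : g' =O[𝓝 x₀] fun x => (x - x₀) ^ n) :
    (fun x => g x - g x₀) =O[𝓝 x₀] fun x => (x - x₀) ^ (n + 1) := by
  obtain ⟨c, hc0, hc⟩ := hg'.exists_nonneg
  obtain ⟨ε, hε, hball⟩ := Metric.eventually_nhds_iff_ball.1 (hg.and hc.bound)
  refine IsBigO.of_bound c (eventually_of_mem (Metric.ball_mem_nhds x₀ hε) fun x hx => ?_)
  have hseg : uIcc x₀ x ⊆ Metric.ball x₀ ε := by
    rw [← segment_eq_uIcc]
    exact (convex_ball x₀ ε).segment_subset (Metric.mem_ball_self hε) hx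
  have hderiv_le : ∀ y ∈ uIcc x₀ x, ‖g' y‖ ≤ c * |x - x₀| ^ n := fun y hy => by
    refine ((hball y (hseg hy)).2).trans ?_
    rw [norm_pow, Real.norm_eq_abs]
    gcongr c * ?_ ^ n
    exact abs_sub_left_of_mem_uIcc hy
  calc ‖g x - g x₀‖ ≤ c * |x - x₀| ^ n * ‖x - x₀‖ :=
        (convex_uIcc x₀ x).norm_image_sub_le_of_norm_hasDerivWithin_le
          (fun y hy => (hball y (hseg hy)).1.hasDerivWithinAt) hderiv_le
          left_mem_uIcc right_mem_uIcc
    _ = c * ‖(x - x₀) ^ (n + 1)‖ := by rw [norm_pow, Real.norm_eq_abs, pow_succ]; ring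

theorem ContDiffAt.isBigO_taylor_one {E : Type*} [NormedAddCommGroup E] [NormedSpace ℝ E]
    {g : ℝ → E} {x₀ : ℝ} (hg : ContDiffAt ℝ 2 g x₀) :
    (fun x => g x - g x₀ - (x - x₀) • deriv g x₀) =O[𝓝 x₀] fun x => (x - x₀) ^ 2 := by
  have hderiv : ∀ᶠ x in 𝓝 x₀, HasDerivAt (fun x => g x - g x₀ - (x - x₀) • deriv g x₀)
      (deriv g x - deriv g x₀) x :=
    (hg.eventually (by simp)).mono fun x hx => by
      refine (((hx.differentiableAt (by simp)).hasDerivAt.sub_const (g x₀)).sub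
        (((hasDerivAt_id x).sub_const x₀).smul_const (deriv g x₀))).congr_deriv ?_
      simp
  have hderiv_sub : (fun x => deriv g x - deriv g x₀) =O[𝓝 x₀] fun x => (x - x₀) ^ 1 := by
    simpa using ((hg.derivWithin (m := 1) (by norm_num)).differentiableAt
      (by simp)).hasDerivAt.isBigO_sub
  simpa using isBigO_sub_pow_succ_of_hasDerivAt hderiv hderiv_sub

theorem ContDiffAt.isBigO_taylor_two {E : Type*} [NormedAddCommGroup E] [NormedSpace ℝ E]
    {g : ℝ → E} {x₀ : ℝ} (hg : ContDiffAt ℝ 3 g x₀) :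
    (fun x => g x - g x₀ - (x - x₀) • deriv g x₀ - ((x - x₀) ^ 2 / 2) • deriv (deriv g) x₀)
      =O[𝓝 x₀] fun x => (x - x₀) ^ 3 := by
  have hderiv : ∀ᶠ x in 𝓝 x₀, HasDerivAt
      (fun x => g x - g x₀ - (x - x₀) • deriv g x₀ - ((x - x₀) ^ 2 / 2) • deriv (deriv g) x₀)
      (deriv g x - deriv g x₀ - (x - x₀) • deriv (deriv g) x₀) x :=
    (hg.eventually (by simp)).mono fun x hx => by
      have hsq : HasDerivAt (fun x => (x - x₀) ^ 2 / 2) (x - x₀) x := by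
        simpa using (((hasDerivAt_id x).sub_const x₀).pow 2).div_const 2
      refine ((((hx.differentiableAt (by simp)).hasDerivAt.sub_const (g x₀)).sub
        (((hasDerivAt_id x).sub_const x₀).smul_const (deriv g x₀))).sub
        (hsq.smul_const (deriv (deriv g) x₀))).congr_deriv ?_
      simp
  simpa using isBigO_sub_pow_succ_of_hasDerivAt hderiv
    (hg.derivWithin (m := 2) (by norm_num)).isBigO_taylor_one

theorem isBigO_sub_mul_of_isBigO_pow {g : ℝ → ℝ} {x₀ : ℝ} {n : ℕ}
    (hg : g =O[𝓝 x₀] fun x => (x - x₀) ^ n) :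
    (fun x => (x - x₀) * g x) =O[𝓝 x₀] fun x => (x - x₀) ^ (n + 1) := by
  simpa [pow_succ'] using (isBigO_refl (fun x => x - x₀) _).mul hg

section Orbit

variable {X : Type*} [PseudoMetricSpace X] {T : X → X} {α : X}

theorem eventually_dist_le_mul_of_dist_le_pow {C q : ℝ} {p : ℕ} (hp : 1 < p) (hq : 0 < q)
    (hT : ∀ᶠ z in 𝓝 α, dist (T z) α ≤ C * dist z α ^ p) :
    ∀ᶠ z in 𝓝 α, dist (T z) α ≤ q * dist z α := by
  have hsmall : Tendsto (fun z => C * dist z α ^ (p - 1)) (𝓝 α) (𝓝 0) := by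
    have hcont : Continuous fun z => C * dist z α ^ (p - 1) := by fun_prop
    simpa [zero_pow (Nat.sub_ne_zero_of_lt hp)] using hcont.tendsto α
  filter_upwards [hT, hsmall.eventually (eventually_le_nhds hq)] with z hTz hz
  calc dist (T z) α ≤ C * dist z α ^ p := hTz
    _ = C * dist z α ^ (p - 1) * dist z α := by
        rw [mul_assoc, ← pow_succ, Nat.sub_add_cancel hp.le]
    _ ≤ q * dist z α := by gcongr

theorem exists_forall_orbit_of_eventually_dist_le_mul {q : ℝ} (hq0 : 0 ≤ q) (hq1 : q < 1)
    {P : X → Prop} (hT : ∀ᶠ z in 𝓝 α, dist (T z) α ≤ q * dist z α)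
    (hP : ∀ᶠ z in 𝓝 α, P z) :
    ∃ δ > 0, ∀ x : ℕ → X, dist (x 0) α < δ → (∀ n, x (n + 1) = T (x n)) →
      (∀ n, P (x n)) ∧ Tendsto x atTop (𝓝 α) := by
  obtain ⟨δ, hδ, hball⟩ := Metric.eventually_nhds_iff.1 (hT.and hP)
  refine ⟨δ, hδ, fun x hx0 hx => ?_⟩
  have hmem_of_le : ∀ n, dist (x n) α ≤ q ^ n * dist (x 0) α → dist (x n) α < δ := fun n h =>
    h.trans_lt <| (mul_le_of_le_one_left dist_nonneg (pow_le_one₀ hq0 hq1.le)).trans_lt hx0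
  have hgeom : ∀ n, dist (x n) α ≤ q ^ n * dist (x 0) α := by
    intro n
    induction n with
    | zero => simp
    | succ n ih =>
      calc dist (x (n + 1)) α = dist (T (x n)) α := by rw [hx n]
        _ ≤ q * dist (x n) α := (hball (hmem_of_le n ih)).1
        _ ≤ q * (q ^ n * dist (x 0) α) := by gcongr
        _ = q ^ (n + 1) * dist (x 0) α := by ring
  refine ⟨fun n => (hball (hmem_of_le n (hgeom n))).2, ?_⟩
  refine tendsto_iff_dist_tendsto_zero.2 (squeeze_zero (fun _ => dist_nonneg) hgeom ?_)
  simpa using (tendsto_pow_atTop_nhds_zero_of_lt_one hq0 hq1).mul_const (dist (x 0) α)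

end Orbit

section WeerakoonFernando

variable {f : ℝ → ℝ} {α : ℝ}

noncomputable def newtonStep (f : ℝ → ℝ) (x : ℝ) : ℝ := x - f x / deriv f x

noncomputable def wfmStep (f : ℝ → ℝ) (x : ℝ) : ℝ :=
  x - 2 * f x / (deriv f x + deriv f (newtonStep f x))

theorem isBigO_newtonStep_sub (hf : ContDiffAt ℝ 2 f α) (hroot : f α = 0)
    (hsimple : deriv f α ≠ 0) :
    (fun x => newtonStep f x - α) =O[𝓝 α] fun x => (x - α) ^ 2 := by
  have hf' : ContDiffAt ℝ 1 (deriv f) α := hf.derivWithin (by norm_num)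
  have hnum : (fun x => (x - α) * (deriv f x - deriv f α) - (f x - f α - (x - α) • deriv f α))
      =O[𝓝 α] fun x => (x - α) ^ 2 :=
    (isBigO_sub_mul_of_isBigO_pow (n := 1) (by
      simpa using (hf'.differentiableAt (by simp)).hasDerivAt.isBigO_sub)).sub
      hf.isBigO_taylor_one
  have hinv : (fun x => (deriv f x)⁻¹) =O[𝓝 α] fun _ => (1 : ℝ) :=
    (hf'.continuousAt.tendsto.inv₀ hsimple).isBigO_one ℝ
  refine (hnum.mul hinv).congr' ?_ (by simp)
  filter_upwards [hf'.continuousAt.eventually_ne hsimple] with x hx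
  simp only [newtonStep, hroot, smul_eq_mul]
  field_simp
  ring

theorem tendsto_newtonStep (hf : ContDiffAt ℝ 2 f α) (hroot : f α = 0)
    (hsimple : deriv f α ≠ 0) : Tendsto (newtonStep f) (𝓝 α) (𝓝 α) := by
  have hsq : Tendsto (fun x => (x - α) ^ 2) (𝓝 α) (𝓝 0) := by
    have hcont : Continuous fun x : ℝ => (x - α) ^ 2 := by fun_prop
    simpa using hcont.tendsto α
  exact tendsto_sub_nhds_zero_iff.1
    ((isBigO_newtonStep_sub hf hroot hsimple).trans_tendsto hsq)

theorem tendsto_wfm_denominator (hf : ContDiffAt ℝ 2 f α) (hroot : f α = 0)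
    (hsimple : deriv f α ≠ 0) :
    Tendsto (fun x => deriv f x + deriv f (newtonStep f x)) (𝓝 α) (𝓝 (2 * deriv f α)) := by
  have hd : Tendsto (deriv f) (𝓝 α) (𝓝 (deriv f α)) :=
    (hf.derivWithin (m := 1) (by norm_num)).continuousAt.tendsto
  simpa [two_mul] using hd.add (hd.comp (tendsto_newtonStep hf hroot hsimple))

theorem isBigO_wfmStep_sub (hf : ContDiffAt ℝ 3 f α) (hroot : f α = 0)
    (hsimple : deriv f α ≠ 0) :
    (fun x => wfmStep f x - α) =O[𝓝 α] fun x => (x - α) ^ 3 := by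
  have hf2 : ContDiffAt ℝ 2 f α := hf.of_le (by norm_num)
  have hw := isBigO_newtonStep_sub hf2 hroot hsimple
  have hR := (hf.derivWithin (m := 2) (by norm_num)).isBigO_taylor_one
  have hRw : (fun x => deriv f (newtonStep f x) - deriv f α -
      (newtonStep f x - α) • deriv (deriv f) α) =O[𝓝 α] fun x => (x - α) ^ 2 := by
    refine (hR.comp_tendsto (tendsto_newtonStep hf2 hroot hsimple)).trans
      ((hw.pow 2).trans ?_)
    rw [← isBigO_norm_norm]
    simpa only [norm_pow, ← pow_mul, Nat.reduceMul] using
      (isLittleO_pow_sub_pow_sub α (by norm_num : 2 < 4)).isBigO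
  have hD := tendsto_wfm_denominator hf2 hroot hsimple
  have h2a : 2 * deriv f α ≠ 0 := mul_ne_zero two_ne_zero hsimple
  -- The numerator is `e R(x) + e R(w) + f''(α) e (w - α) - 2 R₀(x)`, where `R` and `R₀` are the
  -- Taylor remainders of `f'` and `f` at `α`: the terms of order `e` and `e²` cancel exactly.
  have hnum : (fun x => (x - α) * (deriv f x + deriv f (newtonStep f x)) - 2 * f x)
      =O[𝓝 α] fun x => (x - α) ^ 3 := by
    refine ((((isBigO_sub_mul_of_isBigO_pow hR).add (isBigO_sub_mul_of_isBigO_pow hRw)).add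
      ((isBigO_sub_mul_of_isBigO_pow hw).const_mul_left (deriv (deriv f) α))).sub
      (hf.isBigO_taylor_two.const_mul_left 2)).congr' (Eventually.of_forall fun x => ?_)
      EventuallyEq.rfl
    simp only [smul_eq_mul, hroot]
    ring
  have hinv : (fun x => (deriv f x + deriv f (newtonStep f x))⁻¹) =O[𝓝 α] fun _ => (1 : ℝ) :=
    (hD.inv₀ h2a).isBigO_one ℝ
  refine (hnum.mul hinv).congr' ?_ (by simp)
  filter_upwards [hD.eventually_ne h2a] with x hx
  simp only [wfmStep]
  field_simp
  ring

end WeerakoonFernando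

/-- **Weerakoon–Fernando method, real case.** If `f : ℝ → ℝ` is three times continuously
differentiable on a neighborhood of a simple root `α` (with `f α = 0` and `deriv f α ≠ 0`),
then there are `δ > 0` and `C ≥ 0` such that from any starting point `x₀` with
`|x₀ - α| < δ`, the WFM iteration
`x_{n+1} = x_n - 2 f(x_n) / (f'(x_n) + f'(x_n - f(x_n)/f'(x_n)))`
is well defined (all denominators nonzero), converges to `α`, and satisfies
`|x_{n+1} - α| ≤ C |x_n - α|³` for all `n`. -/
theorem wfm_real_cubic_convergence
    (f : ℝ → ℝ) (α : ℝ) (s : Set ℝ) (hs : s ∈ nhds α)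
    (hf : ContDiffOn ℝ 3 f s)
    (hroot : f α = 0) (hsimple : deriv f α ≠ 0) :
    ∃ δ > 0, ∃ C ≥ (0 : ℝ), ∀ x₀ : ℝ, |x₀ - α| < δ →
      ∀ x : ℕ → ℝ, x 0 = x₀ →
        (∀ n, x (n + 1) =
          x n - 2 * f (x n) /
            (deriv f (x n) + deriv f (x n - f (x n) / deriv f (x n)))) →
        (∀ n, deriv f (x n) ≠ 0 ∧
            deriv f (x n) + deriv f (x n - f (x n) / deriv f (x n)) ≠ 0) ∧
        Tendsto x atTop (nhds α) ∧
        (∀ n, |x (n + 1) - α| ≤ C * |x n - α| ^ 3) := by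
  have hf3 : ContDiffAt ℝ 3 f α := hf.contDiffAt hs
  have hf2 : ContDiffAt ℝ 2 f α := hf3.of_le (by norm_num)
  obtain ⟨C, hC0, hC⟩ := (isBigO_wfmStep_sub hf3 hroot hsimple).exists_nonneg
  have hcubic : ∀ᶠ z in 𝓝 α, dist (wfmStep f z) α ≤ C * dist z α ^ 3 :=
    hC.bound.mono fun z hz => by simpa [Real.dist_eq] using hz
  have hdefined : ∀ᶠ z in 𝓝 α, deriv f z ≠ 0 ∧ deriv f z + deriv f (newtonStep f z) ≠ 0 :=
    ((hf3.derivWithin (m := 1) (by norm_num)).continuousAt.eventually_ne hsimple).and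
      ((tendsto_wfm_denominator hf2 hroot hsimple).eventually_ne
        (mul_ne_zero two_ne_zero hsimple))
  obtain ⟨δ, hδ, horbit⟩ := exists_forall_orbit_of_eventually_dist_le_mul (by norm_num)
    (by norm_num) (eventually_dist_le_mul_of_dist_le_pow (by norm_num) one_half_pos hcubic)
    (hdefined.and hcubic)
  refine ⟨δ, hδ, C, hC0, fun x₀ hx₀ x hx0 hrec => ?_⟩
  obtain ⟨hgood, hlim⟩ := horbit x (by rwa [hx0, Real.dist_eq]) hrec
  refine ⟨fun n => (hgood n).1, hlim, fun n => ?_⟩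
  rw [hrec n, ← Real.dist_eq, ← Real.dist_eq]
  exact (hgood n).2
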